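/- arXiv:2605.00622 — 2 statements merged into one kernel-verified Lean document; each statement's English description precedes it below -/
import Mathlib

section
/- If Q is a minimal witness to a set Γ of k pairwise non-isomorphic posets each of size n, with k ≥ 2, then |Q| ≤ n(k−1) + 1. -/
/-!
Formalization framework: finite posets are bundled as `FinPartOrd.{0}`, downsets are
`Finset`s of elements, unlabelled posets are isomorphism classes (`UPoset`), and a witness
of a set `Γ` of unlabelled posets at size `n` is a finite poset whose set of size-`n`
downsets, up to isomorphism, is exactly `Γ`.
-/

attribute [local instance] Classical.propDecidable

noncomputable section

open Finset

/-- `D` is a downset of the finite poset `Q`. -/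
def IsDownset (Q : FinPartOrd.{0}) (D : Finset ↥Q) : Prop :=
  ∀ ⦃a b : ↥Q⦄, a ∈ D → b ≤ a → b ∈ D

/-- The induced subposet of `Q` on a finset `D` of its elements. -/
def subposet (Q : FinPartOrd.{0}) (D : Finset ↥Q) : FinPartOrd.{0} :=
  FinPartOrd.of {x : ↥Q // x ∈ D}

/-- The isomorphism setoid on finite posets. -/
def isoSetoid : Setoid FinPartOrd.{0} where
  r P Q := Nonempty (↥P ≃o ↥Q)
  iseqv := ⟨fun _ => ⟨OrderIso.refl _⟩, fun ⟨e⟩ => ⟨e.symm⟩, fun ⟨e⟩ ⟨f⟩ => ⟨e.trans f⟩⟩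

/-- Unlabelled finite posets: isomorphism classes of finite posets. -/
def UPoset := Quotient isoSetoid

/-- The isomorphism class of a finite poset. -/
def cls (P : FinPartOrd.{0}) : UPoset := Quotient.mk isoSetoid P

/-- The number of elements of a finite poset. -/
def size (Q : FinPartOrd.{0}) : ℕ := Fintype.card ↥Q

/-- The size of an isomorphism class of finite posets. -/
def usize : UPoset → ℕ :=
  Quotient.lift size fun _ _ h => h.elim fun e => Fintype.card_congr e.toEquiv

/-- `D_n(Q)` : the set of downsets of `Q` of size `n`, up to isomorphism. -/
def DSet (n : ℕ) (Q : FinPartOrd.{0}) : Set UPoset :=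
  {c | ∃ D : Finset ↥Q, IsDownset Q D ∧ D.card = n ∧ cls (subposet Q D) = c}

/-- `d_n(Q)` : the number of isomorphism classes of downsets of `Q` of size `n`. -/
def dNum (n : ℕ) (Q : FinPartOrd.{0}) : ℕ := (DSet n Q).ncard

/-- `D(Q)` : the set of nonempty downsets of `Q`, up to isomorphism. -/
def DAllSet (Q : FinPartOrd.{0}) : Set UPoset :=
  {c | ∃ D : Finset ↥Q, IsDownset Q D ∧ D.Nonempty ∧ cls (subposet Q D) = c}

/-- `Q` is a witness of the set `Γ` of unlabelled posets (at size `n`): the set of size-`n`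
downsets of `Q`, up to isomorphism, is exactly `Γ`. -/
def IsWitness (n : ℕ) (Γ : Set UPoset) (Q : FinPartOrd.{0}) : Prop := DSet n Q = Γ

/-- `Q` is a minimal witness of `Γ` : `Q` is a witness and no proper downset of `Q` is
itself a witness of `Γ`. -/
def IsMinimalWitness (n : ℕ) (Γ : Set UPoset) (Q : FinPartOrd.{0}) : Prop :=
  IsWitness n Γ Q ∧
    ∀ D : Finset ↥Q, IsDownset Q D → D ≠ Finset.univ → ¬IsWitness n Γ (subposet Q D)

/-- The height of an element: the number of elements of a longest chain whose maximum is `x`. -/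
def heightEl (Q : FinPartOrd.{0}) (x : ↥Q) : ℕ :=
  sSup {k | ∃ c : Finset ↥Q, IsChain (· ≤ ·) (c : Set ↥Q) ∧ x ∈ c ∧ (∀ y ∈ c, y ≤ x) ∧ c.card = k}

/-- The height of a finite poset: the number of elements of a longest chain. -/
def posetHeight (Q : FinPartOrd.{0}) : ℕ :=
  sSup {k | ∃ c : Finset ↥Q, IsChain (· ≤ ·) (c : Set ↥Q) ∧ c.card = k}

/-- A finite poset is Newtonian if every element of level `i` covers every element of
level `i - 1`. -/
def Newtonian (Q : FinPartOrd.{0}) : Prop :=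
  ∀ x y : ↥Q, heightEl Q y = heightEl Q x + 1 → x ⋖ y

/-- A finite poset is connected if it is nonempty and any two elements are joined by a
comparability path. -/
def ConnectedPoset (Q : FinPartOrd.{0}) : Prop :=
  Nonempty ↥Q ∧ ∀ x y : ↥Q, Relation.ReflTransGen (fun a b : ↥Q => a ≤ b ∨ b ≤ a) x y

/-- `x` is a maximal element of the subset `W` of `Q`. -/
def IsMaxIn (Q : FinPartOrd.{0}) (W : Finset ↥Q) (x : ↥Q) : Prop :=
  x ∈ W ∧ ∀ y ∈ W, x ≤ y → y = x

/-- `x` is a maximal element of the finite poset `R`. -/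
def IsMaxEl (R : FinPartOrd.{0}) (x : ↥R) : Prop := ∀ y, x ≤ y → y = x

/-- A poset of type 𝒲 : the disjoint union of two connected Newtonian posets that are not
isomorphic, but which only differ in one maximal element (they become isomorphic after the
removal of a suitable maximal element from each). -/
def TypeW (P : FinPartOrd.{0}) : Prop :=
  ∃ W₁ W₂ : Finset ↥P,
    W₁ ∪ W₂ = Finset.univ ∧ Disjoint W₁ W₂ ∧
    (∀ x ∈ W₁, ∀ y ∈ W₂, ¬x ≤ y ∧ ¬y ≤ x) ∧
    ConnectedPoset (subposet P W₁) ∧ ConnectedPoset (subposet P W₂) ∧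
    Newtonian (subposet P W₁) ∧ Newtonian (subposet P W₂) ∧
    ¬Nonempty (↥(subposet P W₁) ≃o ↥(subposet P W₂)) ∧
    ∃ x y, IsMaxIn P W₁ x ∧ IsMaxIn P W₂ y ∧
      Nonempty (↥(subposet P (W₁.erase x)) ≃o ↥(subposet P (W₂.erase y)))

/-- An antichain on `i` elements. -/
def AntichainFin (i : ℕ) : Type := Fin i

instance (i : ℕ) : PartialOrder (AntichainFin i) where
  le x y := x = y
  le_refl _ := rfl
  le_trans a b c h₁ h₂ := show a = c from (show a = b from h₁).trans (show b = c from h₂)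
  le_antisymm _ _ h _ := h

instance (i : ℕ) : Fintype (AntichainFin i) := inferInstanceAs (Fintype (Fin i))
instance (i : ℕ) : Fintype (WithTop (AntichainFin i)) :=
  inferInstanceAs (Fintype (Option (Fin i)))

/-- `Λ_i`: the poset with `i` minimal elements and one maximal element above all of them. -/
def Lambda (i : ℕ) : FinPartOrd.{0} := FinPartOrd.of (WithTop (AntichainFin i))

/-- `k` disjoint copies of a poset `α`. -/
def Copies (k : ℕ) (α : Type) : Type := Fin k × α

instance (k : ℕ) (α : Type) [PartialOrder α] : PartialOrder (Copies k α) where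
  le x y := x.1 = y.1 ∧ x.2 ≤ y.2
  le_refl _ := ⟨rfl, le_refl _⟩
  le_trans _ _ _ h₁ h₂ := ⟨h₁.1.trans h₂.1, le_trans h₁.2 h₂.2⟩
  le_antisymm x y h₁ h₂ := by
    obtain ⟨x₁, x₂⟩ := x
    obtain ⟨y₁, y₂⟩ := y
    obtain ⟨h, h'⟩ := h₁
    cases h
    exact congrArg _ (le_antisymm h' h₂.2)

instance (k : ℕ) (α : Type) [Fintype α] : Fintype (Copies k α) :=
  inferInstanceAs (Fintype (Fin k × α))

/-- `H_ℓ`: the poset whose connected components are `ℓ` copies of `Λ₂` and one copy of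
`Λ_{3(ℓ-1)}`. -/
def Hposet (ℓ : ℕ) : FinPartOrd.{0} :=
  FinPartOrd.of (Copies ℓ (WithTop (AntichainFin 2)) ⊕ WithTop (AntichainFin (3 * (ℓ - 1))))

/-- The poset `P₀` placed above a chain of `i` elements. -/
def withChain (P₀ : FinPartOrd.{0}) (i : ℕ) : FinPartOrd.{0} :=
  FinPartOrd.of (Fin i ⊕ₗ ↥P₀)

/-- The disjoint union of two finite posets. -/
def disjSum (P R : FinPartOrd.{0}) : FinPartOrd.{0} := FinPartOrd.of (↥P ⊕ ↥R)

/-- The poset `P_iR_i`: the disjoint union of `P₀` and `R₀` each placed above a chain of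
`i` elements. -/
def PRposet (P₀ R₀ : FinPartOrd.{0}) (i : ℕ) : FinPartOrd.{0} :=
  disjSum (withChain P₀ i) (withChain R₀ i)

/-- `C(P₀R₀) = |D(P₀)| + |D(R₀)| − |D(P₀) ∩ D(R₀)|`. -/
def CNum (P₀ R₀ : FinPartOrd.{0}) : ℕ :=
  (DAllSet P₀).ncard + (DAllSet R₀).ncard - (DAllSet P₀ ∩ DAllSet R₀).ncard

/-- The vertices of the exchange graph: the downsets of `Q` of size `n`, as actual subsets. -/
def EGVert (n : ℕ) (Q : FinPartOrd.{0}) : Type :=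
  {D : Finset ↥Q // IsDownset Q D ∧ D.card = n}

/-- The exchange graph `G_n(Q)`: two size-`n` downsets are adjacent iff they differ by
exactly one element. -/
def ExchangeGraph (n : ℕ) (Q : FinPartOrd.{0}) : SimpleGraph (EGVert n Q) where
  Adj X Y := (X.1 \ Y.1).card = 1 ∧ (Y.1 \ X.1).card = 1
  symm := ⟨fun X Y h => ⟨h.2, h.1⟩⟩
  loopless := ⟨fun X h => by
    simp only [Finset.sdiff_self, Finset.card_empty] at h
    exact absurd h.1 (by simp)⟩

/-- The downset `D` of `Q`, viewed as a poset, is isomorphic (a "copy of") `P`. -/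
def IsoTo (Q : FinPartOrd.{0}) (D : Finset ↥Q) (P : FinPartOrd.{0}) : Prop :=
  Nonempty (↥(subposet Q D) ≃o ↥P)

/-- A path `A :: M ++ [C]` in the exchange graph `G_n(Q)` whose first vertex is a copy of
`Pa`, whose last vertex is a copy of `Pb`, and all of whose internal vertices are copies of
`Pmid`. -/
def SpecialPath (n : ℕ) (Q : FinPartOrd.{0}) (Pa Pmid Pb : FinPartOrd.{0})
    (A : EGVert n Q) (M : List (EGVert n Q)) (C : EGVert n Q) : Prop :=
  List.Chain' (ExchangeGraph n Q).Adj (A :: M ++ [C]) ∧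
    IsoTo Q A.1 Pa ∧ IsoTo Q C.1 Pb ∧ ∀ v ∈ M, IsoTo Q v.1 Pmid

/-- `T` is an antichain in `Q`. -/
def IsAntichainIn (Q : FinPartOrd.{0}) (T : Finset ↥Q) : Prop :=
  ∀ x ∈ T, ∀ y ∈ T, x ≤ y → x = y

/-- The possible shapes of `A \ X` and `C \ X`: an antichain possibly together with a single
element below all of it and/or a single element above all of it, or a two-element chain
together with one incomparable element. -/
def GoodForm (Q : FinPartOrd.{0}) (S : Finset ↥Q) : Prop :=
  (∃ T : Finset ↥Q, IsAntichainIn Q T ∧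
    (S = T ∨
      (∃ b, b ∉ T ∧ S = insert b T ∧ ∀ x ∈ T, b < x) ∨
      (∃ t, t ∉ T ∧ S = insert t T ∧ ∀ x ∈ T, x < t) ∨
      (∃ b t, b ∉ T ∧ t ∉ T ∧ b ≠ t ∧ S = insert b (insert t T) ∧
        (∀ x ∈ T, b < x) ∧ ∀ x ∈ T, x < t))) ∨
  (∃ x y z : ↥Q, S = {x, y, z} ∧ x ≠ y ∧ x ≠ z ∧ y ≠ z ∧ x < y ∧
    ¬x ≤ z ∧ ¬z ≤ x ∧ ¬y ≤ z ∧ ¬z ≤ y)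

/-!
Two size-`n` downsets `X`, `E` of different isomorphism types can be replaced by two such
downsets that differ in a single element: exchanging a maximal element of `X \ E` for a minimal
element of `E \ X` keeps `X` a downset and brings it closer to `E`, so the first exchange that
changes the isomorphism type produces such a pair `A`, `B`, with `|A ∪ B| = n + 1`. Adding one
size-`n` downset for each of the remaining `k - 2` types gives a downset of `Q` that is still a
witness, hence all of `Q` by minimality.
-/

section

variable {Q : FinPartOrd.{0}}

theorem IsDownset.union {A B : Finset ↥Q} (hA : IsDownset Q A) (hB : IsDownset Q B) :
    IsDownset Q (A ∪ B) := by
  intro a b ha hba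
  rw [Finset.mem_union] at ha ⊢
  exact ha.imp (hA · hba) (hB · hba)

theorem IsDownset.biUnion {ι : Type*} {s : Finset ι} {f : ι → Finset ↥Q}
    (hf : ∀ i ∈ s, IsDownset Q (f i)) : IsDownset Q (s.biUnion f) := by
  intro a b ha hba
  obtain ⟨i, hi, hai⟩ := Finset.mem_biUnion.1 ha
  exact Finset.mem_biUnion.2 ⟨i, hi, hf i hi hai hba⟩

theorem IsDownset.exists_exchange {X E : Finset ↥Q} (hX : IsDownset Q X) (hE : IsDownset Q E)
    (hcard : X.card = E.card) (hEX : (E \ X).Nonempty) :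
    ∃ X', IsDownset Q X' ∧ X'.card = X.card ∧ (X ∪ X').card = X.card + 1 ∧
      (E \ X').card < (E \ X).card := by
  have hXE : (X \ E).Nonempty := by
    rw [← Finset.card_pos, Finset.card_sdiff_comm hcard]
    exact hEX.card_pos
  obtain ⟨a, ha⟩ := Finset.exists_maximal hXE
  obtain ⟨b, hb⟩ := Finset.exists_minimal hEX
  obtain ⟨haX, haE⟩ := Finset.mem_sdiff.1 ha.1
  obtain ⟨hbE, hbX⟩ := Finset.mem_sdiff.1 hb.1
  have hb_erase : b ∉ X.erase a := fun h => hbX (Finset.mem_of_mem_erase h)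
  refine ⟨insert b (X.erase a), ?_, ?_, ?_, ?_⟩
  · intro p q hp hqp
    rw [Finset.mem_insert, Finset.mem_erase] at hp ⊢
    rcases hp with rfl | ⟨hpa, hpX⟩
    · rcases hqp.eq_or_lt with rfl | hqp
      · exact .inl rfl
      have hqE : q ∈ E := hE hbE hqp.le
      have hqX : q ∈ X := by_contra fun hqX => hb.not_lt (Finset.mem_sdiff.2 ⟨hqE, hqX⟩) hqp
      exact .inr ⟨fun hqa => haE (hqa ▸ hqE), hqX⟩
    · refine .inr ⟨?_, hX hpX hqp⟩
      rintro rfl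
      -- `p` lies above the maximal element `q` of `X \ E`, so `p ∈ E`, and then `q ∈ E`
      have hpE : p ∈ E := by_contra fun hpE =>
        ha.not_gt (Finset.mem_sdiff.2 ⟨hpX, hpE⟩) (lt_of_le_of_ne hqp (Ne.symm hpa))
      exact haE (hE hpE hqp)
  · rw [Finset.card_insert_of_notMem hb_erase, Finset.card_erase_of_mem haX]
    have := Finset.card_pos.2 ⟨a, haX⟩
    omega
  · have : X ∪ insert b (X.erase a) = insert b X := by
      ext x
      simp only [Finset.mem_union, Finset.mem_insert, Finset.mem_erase]
      tauto
    rw [this, Finset.card_insert_of_notMem hbX]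
  · have hsub : E \ insert b (X.erase a) ⊆ (E \ X).erase b := by
      intro x hx
      simp only [Finset.mem_sdiff, Finset.mem_insert, Finset.mem_erase, not_or, not_and] at hx ⊢
      exact ⟨hx.2.1, hx.1, fun hxX => hx.2.2 (fun hxa => haE (hxa ▸ hx.1)) hxX⟩
    calc (E \ insert b (X.erase a)).card ≤ ((E \ X).erase b).card := Finset.card_le_card hsub
      _ < (E \ X).card := Finset.card_erase_lt_of_mem hb.1

theorem IsDownset.exists_cls_ne_card_union_le {n : ℕ} {X E : Finset ↥Q} (hX : IsDownset Q X)
    (hE : IsDownset Q E) (hXn : X.card = n) (hEn : E.card = n)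
    (hne : cls (subposet Q X) ≠ cls (subposet Q E)) :
    ∃ A B : Finset ↥Q, IsDownset Q A ∧ IsDownset Q B ∧ A.card = n ∧ B.card = n ∧
      cls (subposet Q A) ≠ cls (subposet Q B) ∧ (A ∪ B).card ≤ n + 1 := by
  have hEX : (E \ X).Nonempty := by
    rw [Finset.nonempty_iff_ne_empty, Ne, Finset.sdiff_eq_empty_iff_subset]
    intro hEX
    exact hne (Finset.eq_of_subset_of_card_le hEX (by omega) ▸ rfl)
  obtain ⟨X', hX', hX'n, hunion, hcloser⟩ := hX.exists_exchange hE (hXn.trans hEn.symm) hEX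
  by_cases hcls : cls (subposet Q X') = cls (subposet Q X)
  · exact hX'.exists_cls_ne_card_union_le hE (hX'n.trans hXn) hEn (hcls ▸ hne)
  · exact ⟨X, X', hX, hX', hXn, hX'n.trans hXn, Ne.symm hcls, by omega⟩
termination_by (E \ X).card

theorem cls_subposet_subposet (U : Finset ↥Q) (D : Finset ↥(subposet Q U)) :
    cls (subposet (subposet Q U) D) =
      cls (subposet Q (D.map (Function.Embedding.subtype _))) :=
  Quotient.sound ⟨{
    toFun y := ⟨y.1.1, Finset.mem_map_of_mem _ y.2⟩
    invFun x := ⟨(Finset.mem_map.1 x.2).choose, (Finset.mem_map.1 x.2).choose_spec.1⟩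
    left_inv y := Subtype.ext (Subtype.ext (Finset.mem_map.1
      (Finset.mem_map_of_mem (Function.Embedding.subtype _) y.2)).choose_spec.2)
    right_inv x := Subtype.ext (Finset.mem_map.1 x.2).choose_spec.2
    map_rel_iff' := Iff.rfl }⟩

theorem dSet_subposet {U : Finset ↥Q} (hU : IsDownset Q U) (n : ℕ) :
    DSet n (subposet Q U) =
      {c | ∃ V ⊆ U, IsDownset Q V ∧ V.card = n ∧ cls (subposet Q V) = c} := by
  ext c
  constructor
  · rintro ⟨D, hD, hDn, rfl⟩
    refine ⟨D.map (Function.Embedding.subtype _), fun x hx => ?_, ?_,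
      (Finset.card_map _).trans hDn, (cls_subposet_subposet U D).symm⟩
    · obtain ⟨y, -, rfl⟩ := Finset.mem_map.1 hx
      exact y.2
    · intro a b ha hba
      obtain ⟨y, hy, rfl⟩ := Finset.mem_map.1 ha
      exact Finset.mem_map_of_mem _ (hD (b := ⟨b, hU y.2 hba⟩) hy hba)
  · rintro ⟨V, hVU, hV, hVn, rfl⟩
    set D : Finset ↥(subposet Q U) := V.subtype (· ∈ U)
    have hmap : D.map (Function.Embedding.subtype _) = V := Finset.subtype_map_of_mem hVU
    refine ⟨D, fun a b ha hba => ?_, ?_, ?_⟩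
    · exact Finset.mem_subtype.2 (hV (Finset.mem_subtype.1 ha) hba)
    · exact (Finset.card_map _).symm.trans ((congrArg Finset.card hmap).trans hVn)
    · exact (cls_subposet_subposet U D).trans (by rw [hmap])

theorem finite_dSet (n : ℕ) (Q : FinPartOrd.{0}) : (DSet n Q).Finite :=
  (Set.finite_range fun D : Finset ↥Q => cls (subposet Q D)).subset
    fun _ ⟨D, _, _, hD⟩ => ⟨D, hD⟩

theorem IsMinimalWitness.eq_univ {n : ℕ} {Γ : Set UPoset} (hQ : IsMinimalWitness n Γ Q)
    {U : Finset ↥Q} (hU : IsDownset Q U) (hcover : Γ ⊆ DSet n (subposet Q U)) :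
    U = Finset.univ := by
  by_contra hne
  refine hQ.2 U hU hne (hcover.antisymm' ?_)
  rw [dSet_subposet hU, ← (hQ.1 : DSet n Q = Γ)]
  rintro c ⟨V, -, hV⟩
  exact ⟨V, hV⟩

theorem IsMinimalWitness.size_le {n : ℕ} {Γ : Set UPoset} (hQ : IsMinimalWitness n Γ Q)
    {W : Finset ↥Q} (hW : IsDownset Q W) :
    size Q ≤ W.card + n * (Γ \ DSet n (subposet Q W)).ncard := by
  have hfin : (Γ \ DSet n (subposet Q W)).Finite := (hQ.1 ▸ finite_dSet n Q).sdiff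
  set R := hfin.toFinset
  have hrep : ∀ c ∈ R,
      ∃ V : Finset ↥Q, IsDownset Q V ∧ V.card = n ∧ cls (subposet Q V) = c :=
    fun c hc => (hQ.1 ▸ (hfin.mem_toFinset.1 hc).1 : c ∈ DSet n Q)
  choose! rep hrep using hrep
  set U := W ∪ R.biUnion rep
  have hU : IsDownset Q U := hW.union (IsDownset.biUnion fun c hc => (hrep c hc).1)
  have hUuniv : U = Finset.univ := by
    refine hQ.eq_univ hU fun c hc => ?_
    rw [dSet_subposet hU]
    by_cases hcW : c ∈ DSet n (subposet Q W)
    · rw [dSet_subposet hW] at hcW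
      obtain ⟨V, hVW, hV⟩ := hcW
      exact ⟨V, hVW.trans Finset.subset_union_left, hV⟩
    · have hcR : c ∈ R := hfin.mem_toFinset.2 ⟨hc, hcW⟩
      exact ⟨rep c, (Finset.subset_biUnion_of_mem rep hcR).trans Finset.subset_union_right,
        hrep c hcR⟩
  calc size Q = U.card := by rw [hUuniv]; exact Finset.card_univ.symm
    _ ≤ W.card + (R.biUnion rep).card := Finset.card_union_le _ _
    _ ≤ W.card + ∑ c ∈ R, (rep c).card := by gcongr; exact Finset.card_biUnion_le
    _ = W.card + n * (Γ \ DSet n (subposet Q W)).ncard := by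
      rw [Finset.sum_congr rfl fun c hc => (hrep c hc).2.1, Finset.sum_const, smul_eq_mul,
        mul_comm, Set.ncard_eq_toFinset_card _ hfin]

end

theorem minimal_witness_bound_k2_general (n k : ℕ) (hk : 2 ≤ k) (Γ : Set UPoset)
    (hΓcard : Γ.ncard = k) (Q : FinPartOrd.{0})
    (hQ : IsMinimalWitness n Γ Q) :
    size Q ≤ n * (k - 1) + 1 := by
  have hW : DSet n Q = Γ := hQ.1
  have hΓfin : Γ.Finite := Set.finite_of_ncard_pos (by omega)
  obtain ⟨c₁, c₂, hc₁, hc₂, hne⟩ := (Set.one_lt_ncard_iff hΓfin).1 (by omega)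
  rw [← hW] at hc₁ hc₂
  obtain ⟨X, hX, hXn, rfl⟩ := hc₁
  obtain ⟨E, hE, hEn, rfl⟩ := hc₂
  obtain ⟨A, B, hA, hB, hAn, hBn, hAB, hcard⟩ := hX.exists_cls_ne_card_union_le hE hXn hEn hne
  have hpair_within : {cls (subposet Q A), cls (subposet Q B)} ⊆ DSet n (subposet Q (A ∪ B)) := by
    rw [dSet_subposet (hA.union hB), Set.pair_subset_iff]
    exact ⟨⟨A, Finset.subset_union_left, hA, hAn, rfl⟩,
      ⟨B, Finset.subset_union_right, hB, hBn, rfl⟩⟩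
  have hpair_mem : {cls (subposet Q A), cls (subposet Q B)} ⊆ Γ := by
    rw [← hW, Set.pair_subset_iff]
    exact ⟨⟨A, hA, hAn, rfl⟩, ⟨B, hB, hBn, rfl⟩⟩
  have hrest : (Γ \ DSet n (subposet Q (A ∪ B))).ncard ≤ k - 2 := by
    calc _ ≤ (Γ \ {cls (subposet Q A), cls (subposet Q B)}).ncard :=
          Set.ncard_le_ncard (Set.sdiff_subset_sdiff_right hpair_within) hΓfin.sdiff
      _ = k - 2 := by rw [Set.ncard_sdiff hpair_mem, Set.ncard_pair hAB, hΓcard]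
  calc size Q ≤ (A ∪ B).card + n * (k - 2) := (hQ.size_le (hA.union hB)).trans (by gcongr)
    _ ≤ n * (k - 1) + 1 := by
      obtain ⟨j, rfl⟩ : ∃ j, k = j + 2 := ⟨k - 2, by omega⟩
      rw [show j + 2 - 1 = j + 1 by omega, show j + 2 - 2 = j by omega]
      linarith

/-- A minimal witness `Q` to a set of `k ≥ 2` pairwise non-isomorphic
posets of size `n` satisfies `|Q| ≤ n(k−1) + 1`. -/
theorem minimal_witness_bound_k2 (n k : ℕ) (hk : 2 ≤ k) (Γ : Set UPoset) (hΓfin : Γ.Finite)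
    (hΓcard : Γ.ncard = k) (hΓsize : ∀ c ∈ Γ, usize c = n) (Q : FinPartOrd.{0})
    (hQ : IsMinimalWitness n Γ Q) :
    size Q ≤ n * (k - 1) + 1 :=
  minimal_witness_bound_k2_general n k hk Γ hΓcard Q hQ
end
end

section
/- If Q is a minimal witness to a set Γ of k pairwise non-isomorphic posets each of size n, with k ≥ 3, then |Q| ≤ n(k−1). -/
/-!
Formalization framework: finite posets are bundled as `FinPartOrd.{0}`, downsets are
`Finset`s of elements, unlabelled posets are isomorphism classes (`UPoset`), and a witness
of a set `Γ` of unlabelled posets at size `n` is a finite poset whose set of size-`n`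
downsets, up to isomorphism, is exactly `Γ`.
-/

attribute [local instance] Classical.propDecidable

noncomputable section

open Finset

/-!
Call the intersection of all size-`n` downsets of class `γ` the core of `γ`. If some `x` lay in
no core, every class would already occur inside the proper downset of elements not above `x`;
so in a minimal witness the cores cover `Q`. Exchanging elements one at a time between two
downsets of different classes yields two adjacent ones, of classes `δ ≠ ε`, so the cores of
`δ` and `ε` have at most `n + 1` elements together and `|Q| ≤ (n + 1) + (k - 2) n`.
If `|Q|` exceeded `n (k - 1)`, this would be an equality: the other cores would be disjoint
downsets of size `n`, each the only downset of its class. Trading a maximal element of one of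
them for a minimal element `m` of a core of `δ` or `ε` with at least two elements gives a
downset whose class must be `δ` or `ε` and whose core lies in `{m}`, which squeezes the cores
of `δ` and `ε` into `n` elements.
-/

namespace Finset

variable {ι α : Type*} [DecidableEq α]

theorem pairwiseDisjoint_of_sum_card_le_card_biUnion {s : Finset ι} {f : ι → Finset α}
    (h : ∑ i ∈ s, #(f i) ≤ #(s.biUnion f)) : (s : Set ι).PairwiseDisjoint f := by
  induction s using Finset.induction_on with
  | empty => simp
  | insert a s ha ih =>
    rw [sum_insert ha, biUnion_insert] at h
    have hunion := card_union_le (f a) (s.biUnion f)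
    have hle : #(s.biUnion f) ≤ ∑ i ∈ s, #(f i) := card_biUnion_le
    have hdisj : Disjoint (f a) (s.biUnion f) := card_union_eq_card_add_card.mp (by omega)
    rw [coe_insert, Set.pairwiseDisjoint_insert]
    exact ⟨ih (by omega), fun j hj _ => hdisj.mono_right (subset_biUnion_of_mem f hj)⟩

theorem card_eq_and_disjoint_of_le_card_union_biUnion {B : Finset α} {s : Finset ι}
    {f : ι → Finset α} {c b : ℕ} (hB : #B ≤ c) (hf : ∀ i ∈ s, #(f i) ≤ b)
    (h : c + #s * b ≤ #(B ∪ s.biUnion f)) :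
    #B = c ∧ (∀ i ∈ s, #(f i) = b) ∧ (∀ i ∈ s, Disjoint B (f i)) ∧
      (s : Set ι).PairwiseDisjoint f := by
  have hunion := card_union_le B (s.biUnion f)
  have hbiUnion : #(s.biUnion f) ≤ ∑ i ∈ s, #(f i) := card_biUnion_le
  have hsum : ∑ i ∈ s, #(f i) ≤ ∑ _i ∈ s, b := sum_le_sum hf
  rw [sum_const, smul_eq_mul] at hsum
  have hdisj : Disjoint B (s.biUnion f) := card_union_eq_card_add_card.mp (by omega)
  refine ⟨by omega, fun i hi => ?_, fun i hi => hdisj.mono_right (subset_biUnion_of_mem f hi),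
    pairwiseDisjoint_of_sum_card_le_card_biUnion (by omega)⟩
  refine (sum_eq_sum_iff_of_le hf).mp ?_ i hi
  rw [sum_const, smul_eq_mul]
  omega

end Finset

namespace IsDownset

variable {Q : FinPartOrd.{0}} {D : Finset ↥Q}

theorem erase (hD : IsDownset Q D) {x : ↥Q} (hx : Maximal (· ∈ D) x) :
    IsDownset Q (D.erase x) := by
  intro a b ha hba
  obtain ⟨hax, haD⟩ := mem_erase.mp ha
  refine mem_erase.mpr ⟨?_, hD haD hba⟩
  rintro rfl
  exact hax (le_antisymm (hx.2 haD hba) hba)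

theorem insert (hD : IsDownset Q D) {y : ↥Q} (hy : ∀ b < y, b ∈ D) :
    IsDownset Q (insert y D) := by
  intro a b ha hba
  rcases mem_insert.mp ha with rfl | ha
  · rcases hba.lt_or_eq with hlt | rfl
    · exact mem_insert_of_mem (hy b hlt)
    · exact mem_insert_self b D
  · exact mem_insert_of_mem (hD ha hba)

end IsDownset

theorem cls_eq_of_orderIso {P R : FinPartOrd.{0}} (e : ↥P ≃o ↥R) : cls P = cls R :=
  Quot.sound ⟨e⟩

theorem card_subposet (Q : FinPartOrd.{0}) (D : Finset ↥Q) :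
    Fintype.card ↥(subposet Q D) = #D :=
  Fintype.card_coe D

section Subposet

variable {Q : FinPartOrd.{0}} (E : Finset ↥Q)

def subposetSubposetOrderIso (D : Finset ↥(subposet Q E)) :
    ↥(subposet (subposet Q E) D) ≃o ↥(subposet Q (D.map (Function.Embedding.subtype _))) where
  toFun z := ⟨z.1.1, mem_map_of_mem _ z.2⟩
  invFun w := ⟨⟨w.1, by obtain ⟨y, -, hy⟩ := mem_map.mp w.2; exact hy ▸ y.2⟩, by
    obtain ⟨y, hy, hyw⟩ := mem_map.mp w.2
    rwa [show y = ⟨w.1, _⟩ from Subtype.ext hyw] at hy⟩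
  left_inv _ := rfl
  right_inv _ := rfl
  map_rel_iff' := Iff.rfl

theorem DSet_subposet (n : ℕ) (hE : IsDownset Q E) :
    DSet n (subposet Q E) =
      {c | ∃ D : Finset ↥Q, IsDownset Q D ∧ D ⊆ E ∧ #D = n ∧ cls (subposet Q D) = c} := by
  ext c
  constructor
  · rintro ⟨D, hD, rfl, rfl⟩
    refine ⟨D.map (Function.Embedding.subtype _), ?_, ?_, card_map _,
      (cls_eq_of_orderIso (subposetSubposetOrderIso E D)).symm⟩
    · intro a b ha hba
      obtain ⟨y, hy, rfl⟩ := mem_map.mp ha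
      exact mem_map.mpr ⟨⟨b, hE y.2 hba⟩, hD hy hba, rfl⟩
    · intro a ha
      obtain ⟨y, -, rfl⟩ := mem_map.mp ha
      exact y.2
  · rintro ⟨D, hD, hDE, rfl, rfl⟩
    let D' : Finset ↥(subposet Q E) := D.subtype (· ∈ E)
    have hmap : D'.map (Function.Embedding.subtype _) = D := subtype_map_of_mem hDE
    refine ⟨D', fun a _ ha hba => ?_, ?_, ?_⟩
    · exact mem_subtype.mpr (hD (mem_subtype.mp ha) hba)
    · exact (card_map _).symm.trans (congrArg card hmap)
    · rw [cls_eq_of_orderIso (subposetSubposetOrderIso E _), hmap]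

end Subposet

def classCore (n : ℕ) (Q : FinPartOrd.{0}) (γ : UPoset) : Finset ↥Q :=
  {x | ∀ D : Finset ↥Q, IsDownset Q D → #D = n → cls (subposet Q D) = γ → x ∈ D}

section ClassCore

variable {n : ℕ} {Q : FinPartOrd.{0}} {γ : UPoset}

theorem mem_classCore {x : ↥Q} :
    x ∈ classCore n Q γ ↔
      ∀ D : Finset ↥Q, IsDownset Q D → #D = n → cls (subposet Q D) = γ → x ∈ D := by
  simp [classCore]

theorem classCore_subset {D : Finset ↥Q} (hD : IsDownset Q D) (hDn : #D = n)
    (hDγ : cls (subposet Q D) = γ) : classCore n Q γ ⊆ D :=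
  fun _ hx => mem_classCore.mp hx D hD hDn hDγ

theorem isDownset_classCore : IsDownset Q (classCore n Q γ) := fun _ _ ha hba =>
  mem_classCore.mpr fun D hD hDn hDγ => hD (mem_classCore.mp ha D hD hDn hDγ) hba

theorem card_classCore_le (hγ : γ ∈ DSet n Q) : #(classCore n Q γ) ≤ n := by
  obtain ⟨D, hD, hDn, hDγ⟩ := hγ
  exact (card_le_card (classCore_subset hD hDn hDγ)).trans hDn.le

theorem classCore_eq_of_card_eq {D : Finset ↥Q} (hD : IsDownset Q D) (hDn : #D = n)
    (hDγ : cls (subposet Q D) = γ) (hγn : #(classCore n Q γ) = n) : classCore n Q γ = D :=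
  eq_of_subset_of_card_le (classCore_subset hD hDn hDγ) (by omega)

theorem IsMinimalWitness.exists_mem_classCore {Γ : Set UPoset} (hQ : IsMinimalWitness n Γ Q)
    (x : ↥Q) : ∃ γ ∈ Γ, x ∈ classCore n Q γ := by
  let E : Finset ↥Q := {y | ¬x ≤ y}
  have hE : IsDownset Q E := fun a b ha hba => by
    simp only [E, mem_filter, mem_univ, true_and] at ha ⊢
    exact fun hxb => ha (hxb.trans hba)
  have hEuniv : E ≠ univ := fun h => by
    have hxE : x ∈ E := h ▸ mem_univ x
    simp [E] at hxE
  by_contra! hx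
  refine hQ.2 E hE hEuniv ?_
  rw [IsWitness, DSet_subposet E n hE, ← hQ.1]
  ext c
  constructor
  · rintro ⟨D, hD, -, hDn, hDc⟩
    exact ⟨D, hD, hDn, hDc⟩
  · intro hc
    obtain ⟨D, hD, hDn, hDc, hxD⟩ : ∃ D : Finset ↥Q, IsDownset Q D ∧ #D = n ∧
        cls (subposet Q D) = c ∧ x ∉ D := by
      simpa [mem_classCore] using hx c (hQ.1 ▸ hc)
    refine ⟨D, hD, fun d hd => ?_, hDn, hDc⟩
    simp only [E, mem_filter, mem_univ, true_and]
    exact fun hxd => hxD (hD hd hxd)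

theorem IsMinimalWitness.univ_subset_classCore_union {Γ : Set UPoset}
    (hQ : IsMinimalWitness n Γ Q) {δ ε : UPoset} {A : Finset UPoset}
    (hA : ∀ c ∈ Γ, c ≠ δ → c ≠ ε → c ∈ A) :
    (univ : Finset ↥Q) ⊆ (classCore n Q δ ∪ classCore n Q ε) ∪ A.biUnion (classCore n Q) := by
  intro x _
  obtain ⟨γ, hγ, hx⟩ := hQ.exists_mem_classCore x
  by_cases hγW : γ = δ ∨ γ = ε
  · rcases hγW with rfl | rfl <;> simp [hx]
  · obtain ⟨hγδ, hγε⟩ := not_or.mp hγW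
    exact mem_union_right _ (mem_biUnion.mpr ⟨γ, hA γ hγ hγδ hγε, hx⟩)

end ClassCore

/-- Exchanging a maximal element of `X \ Y` for a minimal element of `Y \ X` keeps `X` a
downset of the same size and brings it one step closer to `Y`. -/
theorem exists_adjacent_downsets {Q : FinPartOrd.{0}} {β : Type*} (f : Finset ↥Q → β) {n : ℕ}
    {X Y : Finset ↥Q} (hX : IsDownset Q X) (hXn : #X = n) (hY : IsDownset Q Y) (hYn : #Y = n)
    (hXY : f X ≠ f Y) :
    ∃ X' Y' : Finset ↥Q, IsDownset Q X' ∧ #X' = n ∧ IsDownset Q Y' ∧ #Y' = n ∧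
      f X' ≠ f Y' ∧ #(X' ∪ Y') ≤ n + 1 := by
  induction hd : #(Y \ X) using Nat.strong_induction_on generalizing X with
  | _ d ih =>
    have hunion : #(Y \ X) + #X = #(Y ∪ X) := card_sdiff_add_card Y X
    by_cases hd1 : d ≤ 1
    · exact ⟨X, Y, hX, hXn, hY, hYn, hXY, by rw [union_comm]; omega⟩
    have hXYn : #(X \ Y) = #(Y \ X) := card_sdiff_comm (hXn.trans hYn.symm)
    obtain ⟨x, hx⟩ := (X \ Y).exists_maximal (card_pos.mp (by omega))
    obtain ⟨y, hy⟩ := (Y \ X).exists_minimal (card_pos.mp (by omega))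
    obtain ⟨hxX, hxY⟩ := mem_sdiff.mp hx.1
    obtain ⟨hyY, hyX⟩ := mem_sdiff.mp hy.1
    have hxmax : Maximal (· ∈ X) x :=
      ⟨hxX, fun a ha hxa => hx.2 (mem_sdiff.mpr ⟨ha, fun haY => hxY (hY haY hxa)⟩) hxa⟩
    have hybelow : ∀ b < y, b ∈ X.erase x := fun b hby => by
      have hbY : b ∈ Y := hY hyY hby.le
      have hbX : b ∈ X := by_contra fun hbX => (hy.2 (mem_sdiff.mpr ⟨hbY, hbX⟩) hby.le).not_gt hby
      exact mem_erase.mpr ⟨fun hbx => hxY (hbx ▸ hbY), hbX⟩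
    let Z := insert y (X.erase x)
    have hZ : IsDownset Q Z := (hX.erase hxmax).insert hybelow
    have hZn : #Z = n := by
      rw [card_insert_of_notMem fun h => hyX (mem_of_mem_erase h), card_erase_add_one hxX, hXn]
    by_cases hZX : f Z = f X
    · have hYZ : Y \ Z ⊂ Y \ X := by
        refine Finset.ssubset_of_subset_of_ssubset (fun z hz => ?_) (erase_ssubset hy.1)
        simp only [Z, mem_sdiff, mem_insert, mem_erase, not_or, not_and] at hz
        exact mem_erase.mpr ⟨hz.2.1, mem_sdiff.mpr
          ⟨hz.1, fun hzX => hz.2.2 (fun hzx => hxY (hzx ▸ hz.1)) hzX⟩⟩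
      exact ih _ (hd ▸ card_lt_card hYZ) hZ hZn (hZX ▸ hXY) rfl
    · refine ⟨X, Z, hX, hXn, hZ, hZn, Ne.symm hZX, ?_⟩
      calc #(X ∪ Z) ≤ #(insert y X) := card_le_card fun z hz => by
            simp only [Z, mem_union, mem_insert, mem_erase] at hz ⊢
            tauto
        _ ≤ n + 1 := hXn ▸ card_insert_le y X

theorem two_le_of_one_lt_ncard_DSet {n : ℕ} {Q : FinPartOrd.{0}} (h : 1 < (DSet n Q).ncard) :
    2 ≤ n := by
  by_contra! hn
  refine h.not_ge ((Set.ncard_le_one (Set.finite_of_ncard_pos (by omega))).mpr ?_)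
  rintro _ ⟨D₁, -, hD₁, rfl⟩ _ ⟨D₂, -, hD₂, rfl⟩
  have hcard : Fintype.card ↥(subposet Q D₁) = Fintype.card ↥(subposet Q D₂) := by
    rw [card_subposet, card_subposet, hD₁, hD₂]
  have : Subsingleton ↥(subposet Q D₁) :=
    Fintype.card_le_one_iff_subsingleton.mp (by rw [card_subposet]; omega)
  exact cls_eq_of_orderIso
    { toEquiv := Fintype.equivOfCardEq hcard
      map_rel_iff' := fun {a b} => by simp [Subsingleton.elim a b] }

theorem exists_ne_card_classCore_union_le {n : ℕ} {Q : FinPartOrd.{0}} {γ₁ γ₂ : UPoset}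
    (h₁ : γ₁ ∈ DSet n Q) (h₂ : γ₂ ∈ DSet n Q) (h₁₂ : γ₁ ≠ γ₂) :
    ∃ δ ∈ DSet n Q, ∃ ε ∈ DSet n Q, δ ≠ ε ∧ #(classCore n Q δ ∪ classCore n Q ε) ≤ n + 1 := by
  obtain ⟨D₁, hD₁, hD₁n, rfl⟩ := h₁
  obtain ⟨D₂, hD₂, hD₂n, rfl⟩ := h₂
  obtain ⟨X, Y, hX, hXn, hY, hYn, hXY, hXYn⟩ :=
    exists_adjacent_downsets (fun D => cls (subposet Q D)) hD₁ hD₁n hD₂ hD₂n h₁₂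
  exact ⟨_, ⟨X, hX, hXn, rfl⟩, _, ⟨Y, hY, hYn, rfl⟩, hXY,
    (card_le_card (union_subset_union (classCore_subset hX hXn rfl)
      (classCore_subset hY hYn rfl))).trans hXYn⟩

section Saturated

variable {n : ℕ} {Q : FinPartOrd.{0}} {δ ε γ₀ : UPoset} {A : Finset UPoset}

/-- The downset obtained from the core of `γ₀` by trading a maximal element for `m` cannot
have its class in `A`: its core would be the whole downset and would meet the core of `γ₀`. -/
theorem exists_classCore_subset_singleton (hn : 2 ≤ n)
    (hA : ∀ c ∈ DSet n Q, c ≠ δ → c ≠ ε → c ∈ A) (hfull : ∀ c ∈ A, #(classCore n Q c) = n)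
    (hWdisj : ∀ c ∈ A, Disjoint (classCore n Q δ ∪ classCore n Q ε) (classCore n Q c))
    (hdisj : (A : Set UPoset).PairwiseDisjoint (classCore n Q)) (hγ₀ : γ₀ ∈ A) {m : ↥Q}
    (hm : IsMin m) (hmγ₀ : m ∉ classCore n Q γ₀) :
    ∃ c, (c = δ ∨ c = ε) ∧ classCore n Q c ⊆ {m} := by
  set U := classCore n Q γ₀
  obtain ⟨x, hx⟩ := U.exists_maximal (card_pos.mp (by rw [hfull γ₀ hγ₀]; omega))
  obtain ⟨u, hu⟩ : (U.erase x).Nonempty :=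
    card_pos.mp (by rw [card_erase_of_mem hx.1, hfull γ₀ hγ₀]; omega)
  let M := insert m (U.erase x)
  have hM : IsDownset Q M :=
    (isDownset_classCore.erase hx).insert fun b hb => (hm.not_lt hb).elim
  have hMn : #M = n := by
    rw [card_insert_of_notMem fun h => hmγ₀ (mem_of_mem_erase h), card_erase_add_one hx.1,
      hfull γ₀ hγ₀]
  set c := cls (subposet Q M)
  by_cases hc : c = δ ∨ c = ε
  · refine ⟨c, hc, fun z hz => ?_⟩
    have hzW : z ∈ classCore n Q δ ∪ classCore n Q ε := by
      rcases hc with hc | hc <;> simp [← hc, hz]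
    rcases mem_insert.mp (classCore_subset hM hMn rfl hz) with rfl | hzU
    · exact mem_singleton_self z
    · exact absurd (mem_of_mem_erase hzU) (disjoint_left.mp (hWdisj γ₀ hγ₀) hzW)
  obtain ⟨hcδ, hcε⟩ := not_or.mp hc
  have hcA : c ∈ A := hA c ⟨M, hM, hMn, rfl⟩ hcδ hcε
  have hcM : classCore n Q c = M := classCore_eq_of_card_eq hM hMn rfl (hfull c hcA)
  by_cases hcγ₀ : c = γ₀
  · have hmc : m ∈ classCore n Q c := hcM ▸ mem_insert_self m _
    rw [hcγ₀] at hmc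
    exact (hmγ₀ hmc).elim
  · exact absurd (mem_of_mem_erase hu)
      (disjoint_left.mp (hdisj hcA hγ₀ hcγ₀) (hcM ▸ mem_insert_of_mem hu))

theorem card_classCore_union_le (hn : 2 ≤ n) (hδ : δ ∈ DSet n Q) (hε : ε ∈ DSet n Q)
    (hA : ∀ c ∈ DSet n Q, c ≠ δ → c ≠ ε → c ∈ A) (hfull : ∀ c ∈ A, #(classCore n Q c) = n)
    (hWdisj : ∀ c ∈ A, Disjoint (classCore n Q δ ∪ classCore n Q ε) (classCore n Q c))
    (hdisj : (A : Set UPoset).PairwiseDisjoint (classCore n Q)) (hγ₀ : γ₀ ∈ A) :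
    #(classCore n Q δ ∪ classCore n Q ε) ≤ n := by
  have key : ∀ c₂, (c₂ = δ ∨ c₂ = ε) → 2 ≤ #(classCore n Q c₂) →
      classCore n Q δ ∪ classCore n Q ε ⊆ classCore n Q c₂ := by
    intro c₂ hc₂ h2
    obtain ⟨m, hm⟩ := (classCore n Q c₂).exists_minimal (card_pos.mp (by omega))
    have hmmin : IsMin m := fun b hb => hm.2 (isDownset_classCore hm.1 hb) hb
    have hmW : m ∈ classCore n Q δ ∪ classCore n Q ε := by
      rcases hc₂ with rfl | rfl <;> simp [hm.1]
    obtain ⟨c, hc, hcm⟩ := exists_classCore_subset_singleton hn hA hfull hWdisj hdisj hγ₀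
      hmmin (disjoint_left.mp (hWdisj γ₀ hγ₀) hmW)
    have hcc₂ : c ≠ c₂ := by
      rintro rfl
      have := card_le_card hcm
      rw [card_singleton] at this
      omega
    have hsub : classCore n Q c ⊆ classCore n Q c₂ := hcm.trans (singleton_subset_iff.mpr hm.1)
    rcases hc with rfl | rfl <;> rcases hc₂ with rfl | rfl
    · exact absurd rfl hcc₂
    · exact union_subset hsub subset_rfl
    · exact union_subset subset_rfl hsub
    · exact absurd rfl hcc₂
  by_cases hδ2 : 2 ≤ #(classCore n Q δ)
  · exact (card_le_card (key δ (Or.inl rfl) hδ2)).trans (card_classCore_le hδ)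
  by_cases hε2 : 2 ≤ #(classCore n Q ε)
  · exact (card_le_card (key ε (Or.inr rfl) hε2)).trans (card_classCore_le hε)
  calc #(classCore n Q δ ∪ classCore n Q ε)
      ≤ #(classCore n Q δ) + #(classCore n Q ε) := card_union_le _ _
    _ ≤ n := by omega

end Saturated

theorem minimal_witness_bound_k3_general (n k : ℕ) (hk : 3 ≤ k) (Γ : Set UPoset)
    (hΓcard : Γ.ncard = k) (Q : FinPartOrd.{0})
    (hQ : IsMinimalWitness n Γ Q) :
    size Q ≤ n * (k - 1) := by
  obtain rfl : DSet n Q = Γ := hQ.1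
  have hfin : (DSet n Q).Finite := Set.finite_of_ncard_ne_zero (by omega)
  have hn : 2 ≤ n := two_le_of_one_lt_ncard_DSet (Q := Q) (by omega)
  obtain ⟨γ₁, γ₂, h₁, h₂, h₁₂⟩ := (Set.one_lt_ncard_iff hfin).mp (by omega)
  obtain ⟨δ, hδ, ε, hε, hδε, hW⟩ := exists_ne_card_classCore_union_le h₁ h₂ h₁₂
  let A := hfin.toFinset \ {δ, ε}
  have hA : ∀ c ∈ DSet n Q, c ≠ δ → c ≠ ε → c ∈ A := fun c hc hcδ hcε => by
    simp [A, hc, hcδ, hcε]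
  have hAk : #A = k - 2 := by
    rw [card_sdiff_of_subset (by simp [Set.insert_subset_iff, hδ, hε]), card_pair hδε,
      ← Set.ncard_eq_toFinset_card _ hfin, hΓcard]
  by_contra! hbig
  have hcount : n + 1 + #A * n ≤ #((classCore n Q δ ∪ classCore n Q ε) ∪
      A.biUnion (classCore n Q)) :=
    calc n + 1 + #A * n = n * (k - 1) + 1 := by
          rw [hAk, show k - 1 = k - 2 + 1 by omega]
          ring
      _ ≤ #(univ : Finset ↥Q) := hbig
      _ ≤ _ := card_le_card (hQ.univ_subset_classCore_union hA)
  obtain ⟨hWn, hfull, hWdisj, hdisj⟩ := card_eq_and_disjoint_of_le_card_union_biUnion hW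
    (fun γ hγ => card_classCore_le (by simp_all [A])) hcount
  obtain ⟨γ₀, hγ₀⟩ : A.Nonempty := card_pos.mp (by omega)
  have := card_classCore_union_le hn hδ hε hA hfull hWdisj hdisj hγ₀
  omega

/-- A minimal witness `Q` to a set of `k ≥ 3` pairwise non-isomorphic
posets of size `n` satisfies `|Q| ≤ n(k−1)`. -/
theorem minimal_witness_bound_k3 (n k : ℕ) (hk : 3 ≤ k) (Γ : Set UPoset) (hΓfin : Γ.Finite)
    (hΓcard : Γ.ncard = k) (hΓsize : ∀ c ∈ Γ, usize c = n) (Q : FinPartOrd.{0})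
    (hQ : IsMinimalWitness n Γ Q) :
    size Q ≤ n * (k - 1) :=
  minimal_witness_bound_k3_general n k hk Γ hΓcard Q hQ
end
end
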